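/- arXiv:1502.01375 — 2 statements merged into one kernel-verified Lean document; each statement's English description precedes it below -/
import Mathlib

section
/- Let (μ¹_t)_{t∈[0,T]} and (μ²_t)_{t∈[0,T]} be two time-dependent families of finite positive Borel measures on ℝ² of total mass N such that s ↦ W₁(μ¹_s, μ²_s) is integrable on [0,T], and let (x₁, w₁) and (x₂, w₂) be trajectories associated with (μ¹_t) and (μ²_t) respectively, with the same initial data x₁(0) = x₂(0), w₁(0) = w₂(0). Then there exists a constant C > 0 such that |x₂(t) − x₁(t)| ≤ C e^{Ct} ∫₀ᵗ W₁(μ¹_s, μ²_s) ds for all t ∈ [0, T]. -/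
/-!
The differences `δx = x₂ - x₁` and `δw = w₂ - w₁` vanish at time `0`. The velocity cap
`w ↦ g(|w| / v_max) w` is the radial retraction onto the ball of radius `v_max`, which is
`2`-Lipschitz, so `|δx'| ≤ 2 |δw|`, while Assumption 1 gives `|δw'| ≤ Lip_a (|δx| + |δw| + W₁)`.
Integrating both, `u = |δx| + |δw|` satisfies
`u(s) ≤ (Lip_a + 2) ∫₀ˢ u + Lip_a ∫₀ᵗ W₁` for `s ≤ t`, and Grönwall's inequality for the
primitive of `u` yields `u(t) ≤ Lip_a e^{(Lip_a + 2) t} ∫₀ᵗ W₁`.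
-/

open MeasureTheory Real

noncomputable section

/-- ℝ² with the Euclidean norm. -/
abbrev E2 : Type := EuclideanSpace ℝ (Fin 2)

/-- First Wasserstein distance via Kantorovich–Rubinstein duality. -/
noncomputable def W1 (μ ν : Measure E2) : ℝ :=
  ⨆ φ : {φ : E2 → ℝ // LipschitzWith 1 φ}, |(∫ y, φ.1 y ∂μ) - ∫ y, φ.1 y ∂ν|

/-- The speed-bounding function `g(z) = min{1, 1/z}` for `z > 0`, `g(0) = 1`. -/
noncomputable def g (z : ℝ) : ℝ := if z = 0 then 1 else min 1 (1 / z)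

open Set

theorem W1_nonneg (μ ν : Measure E2) : 0 ≤ W1 μ ν :=
  Real.iSup_nonneg fun _ => abs_nonneg _

theorem g_le_one (z : ℝ) : g z ≤ 1 := by
  unfold g
  split_ifs
  exacts [le_rfl, min_le_left _ _]

theorem g_nonneg {z : ℝ} (hz : 0 ≤ z) : 0 ≤ g z := by
  unfold g
  split_ifs
  exacts [zero_le_one, le_min zero_le_one (by positivity)]

theorem g_antitoneOn : AntitoneOn g (Ici 0) := by
  intro y hy z _ hyz
  rcases eq_or_lt_of_le (mem_Ici.1 hy) with rfl | hy0
  · exact (g_le_one z).trans_eq (if_pos rfl).symm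
  · simp only [g, if_neg hy0.ne', if_neg (hy0.trans_le hyz).ne']
    gcongr

theorem g_div_mul_self {v r : ℝ} (hv : 0 < v) (hr : 0 ≤ r) : g (r / v) * r = min r v := by
  rcases eq_or_lt_of_le hr with rfl | hr0
  · simp [hv.le]
  · rw [g, if_neg (by positivity), one_div_div, min_mul_of_nonneg _ _ hr0.le, one_mul,
      div_mul_cancel₀ _ hr0.ne', min_comm]

theorem lipschitzWith_g_norm_div_smul {E : Type*} [NormedAddCommGroup E] [NormedSpace ℝ E]
    {v : ℝ} (hv : 0 < v) : LipschitzWith 2 fun w : E => g (‖w‖ / v) • w := by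
  refine LipschitzWith.of_dist_le_mul fun p q => ?_
  simp only [dist_eq_norm, NNReal.coe_ofNat]
  wlog hqp : ‖q‖ ≤ ‖p‖ generalizing p q
  · rw [norm_sub_rev, norm_sub_rev p]
    exact this q p (le_of_not_ge hqp)
  set s : E → ℝ := fun w => g (‖w‖ / v)
  have hsp_le : s p ≤ 1 := g_le_one _
  have hsp_nonneg : 0 ≤ s p := g_nonneg (by positivity)
  have hsp_le_hsq : s p ≤ s q :=
    g_antitoneOn (mem_Ici.2 (by positivity)) (mem_Ici.2 (by positivity)) (by gcongr)
  have hsq : s q * ‖q‖ ≤ s p * ‖p‖ := by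
    simp only [s, g_div_mul_self hv (norm_nonneg _)]
    exact min_le_min_right _ hqp
  calc ‖s p • p - s q • q‖ = ‖s p • (p - q) - (s q - s p) • q‖ := by
        congr 1; module
    _ ≤ ‖s p • (p - q)‖ + ‖(s q - s p) • q‖ := norm_sub_le _ _
    _ = s p * ‖p - q‖ + (s q - s p) * ‖q‖ := by
        rw [norm_smul, norm_smul, Real.norm_of_nonneg hsp_nonneg,
          Real.norm_of_nonneg (sub_nonneg.2 hsp_le_hsq)]
    _ ≤ ‖p - q‖ + s p * (‖p‖ - ‖q‖) := by
        nlinarith [norm_nonneg (p - q)]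
    _ ≤ ‖p - q‖ + (‖p‖ - ‖q‖) := by
        gcongr
        exact mul_le_of_le_one_left (sub_nonneg.2 hqp) hsp_le
    _ ≤ 2 * ‖p - q‖ := by linarith [norm_sub_norm_le p q]

theorem norm_sub_le_integral_of_hasDerivAt {E : Type*} [NormedAddCommGroup E] [NormedSpace ℝ E]
    {f f' : ℝ → E} {B : ℝ → ℝ} {a b : ℝ} (hab : a ≤ b)
    (hf : ∀ s ∈ Icc a b, HasDerivAt f (f' s) s) (hfB : ∀ s ∈ Icc a b, ‖f' s‖ ≤ B s)
    (hB : IntervalIntegrable B volume a b) : ‖f b - f a‖ ≤ ∫ s in a..b, B s :=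
  norm_sub_le_integral_of_norm_deriv_le_of_le hab
    (fun s hs => (hf s hs).continuousAt.continuousWithinAt)
    (fun s hs => (hf s (Ioo_subset_Icc_self hs)).differentiableAt.differentiableWithinAt)
    (ae_of_all _ fun s hs =>
      (hf s (Ioo_subset_Icc_self hs)).deriv ▸ hfB s (Ioo_subset_Icc_self hs)) hB

theorem mul_gronwallBound_zero_add (K ε x : ℝ) :
    K * gronwallBound 0 K ε x + ε = ε * exp (K * x) := by
  rcases eq_or_ne K 0 with rfl | hK
  · simp [gronwallBound_K0]
  · rw [gronwallBound_of_K_ne_0 hK]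
    field_simp
    ring

theorem ContinuousOn.hasDerivWithinAt_integral_Ici {E : Type*} [NormedAddCommGroup E]
    [NormedSpace ℝ E] [CompleteSpace E] {f : ℝ → E} {a b s : ℝ}
    (hf : ContinuousOn f (Icc a b)) (hs : s ∈ Ico a b) :
    HasDerivWithinAt (fun x => ∫ r in a..x, f r) (f s) (Ici s) s := by
  have hmem : Icc a b ∈ nhdsWithin s (Ioi s) := Icc_mem_nhdsGT_of_mem hs
  exact intervalIntegral.integral_hasDerivWithinAt_right
    (hf.mono (Icc_subset_Icc_right hs.2.le) |>.intervalIntegrable_of_Icc hs.1)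
    ((hf.stronglyMeasurableAtFilter_nhdsWithin measurableSet_Icc s).filter_mono
      (nhdsWithin_le_of_mem hmem))
    ((hf s (Ico_subset_Icc_self hs)).mono_of_mem_nhdsWithin hmem)

theorem le_mul_exp_of_le_mul_integral_add {u : ℝ → ℝ} {K ε a b : ℝ} (hK : 0 ≤ K) (hab : a ≤ b)
    (hu : ContinuousOn u (Icc a b)) (h : ∀ s ∈ Icc a b, u s ≤ K * (∫ r in a..s, u r) + ε) :
    u b ≤ ε * exp (K * (b - a)) := by
  have hV : ContinuousOn (fun s => ∫ r in a..s, u r) (Icc a b) := by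
    simpa only [uIcc_of_le hab] using
      intervalIntegral.continuousOn_primitive_interval
        (hu.integrableOn_Icc.mono_set (uIcc_of_le hab).subset)
  have hVb := le_gronwallBound_of_liminf_deriv_right_le hV
    (fun s hs _ hr => (hu.hasDerivWithinAt_integral_Ici hs).liminf_right_slope_le hr)
    intervalIntegral.integral_same.le (fun s hs => h s (Ico_subset_Icc_self hs))
    b (right_mem_Icc.2 hab)
  calc u b ≤ K * (∫ r in a..b, u r) + ε := h b (right_mem_Icc.2 hab)
    _ ≤ K * gronwallBound 0 K ε (b - a) + ε := by gcongr
    _ = ε * exp (K * (b - a)) := mul_gronwallBound_zero_add K ε (b - a)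

theorem norm_add_norm_le_integral_of_hasDerivAt {E : Type*} [NormedAddCommGroup E]
    [NormedSpace ℝ E] {x x' w w' : ℝ → E} {b : ℝ → ℝ} {L M t : ℝ} (hM : 0 ≤ M) (ht : 0 ≤ t)
    (hx : ∀ s ∈ Icc 0 t, HasDerivAt x (x' s) s) (hw : ∀ s ∈ Icc 0 t, HasDerivAt w (w' s) s)
    (hx0 : x 0 = 0) (hw0 : w 0 = 0) (hx' : ∀ s ∈ Icc 0 t, ‖x' s‖ ≤ M * ‖w s‖)
    (hw' : ∀ s ∈ Icc 0 t, ‖w' s‖ ≤ L * (‖x s‖ + ‖w s‖ + b s))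
    (hb : IntervalIntegrable b volume 0 t) :
    ‖x t‖ + ‖w t‖ ≤ (L + M) * (∫ s in 0..t, ‖x s‖ + ‖w s‖) + L * ∫ s in 0..t, b s := by
  set u : ℝ → ℝ := fun s => ‖x s‖ + ‖w s‖
  have hxc : ContinuousOn x (Icc 0 t) := fun s hs => (hx s hs).continuousAt.continuousWithinAt
  have hwc : ContinuousOn w (Icc 0 t) := fun s hs => (hw s hs).continuousAt.continuousWithinAt
  have hu : IntervalIntegrable u volume 0 t :=
    (hxc.norm.add hwc.norm).intervalIntegrable_of_Icc ht
  have hMw : IntervalIntegrable (fun s => M * ‖w s‖) volume 0 t :=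
    (hwc.norm.intervalIntegrable_of_Icc ht).const_mul M
  have hLub : IntervalIntegrable (fun s => L * (u s + b s)) volume 0 t := (hu.add hb).const_mul L
  have hxt : ‖x t‖ ≤ ∫ s in 0..t, M * ‖w s‖ := by
    simpa [hx0] using norm_sub_le_integral_of_hasDerivAt ht hx hx' hMw
  have hwt : ‖w t‖ ≤ ∫ s in 0..t, L * (u s + b s) := by
    simpa [hw0] using norm_sub_le_integral_of_hasDerivAt (B := fun s => L * (u s + b s)) ht hw
      hw' hLub
  calc u t ≤ (∫ s in 0..t, M * ‖w s‖) + ∫ s in 0..t, L * (u s + b s) := add_le_add hxt hwt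
    _ = ∫ s in 0..t, (M * ‖w s‖ + L * (u s + b s)) := (intervalIntegral.integral_add hMw hLub).symm
    _ ≤ ∫ s in 0..t, ((L + M) * u s + L * b s) := by
        refine intervalIntegral.integral_mono_on ht (hMw.add hLub)
          ((hu.const_mul _).add (hb.const_mul L)) fun s _ => ?_
        nlinarith [norm_nonneg (x s)]
    _ = (L + M) * (∫ s in 0..t, u s) + L * ∫ s in 0..t, b s := by
        rw [intervalIntegral.integral_add (hu.const_mul _) (hb.const_mul L),
          intervalIntegral.integral_const_mul, intervalIntegral.integral_const_mul]

theorem norm_le_mul_exp_mul_integral_of_hasDerivAt {E : Type*} [NormedAddCommGroup E]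
    [NormedSpace ℝ E] {x x' w w' : ℝ → E} {b : ℝ → ℝ} {L M t : ℝ} (hL : 0 ≤ L) (hM : 0 ≤ M)
    (ht : 0 ≤ t) (hx : ∀ s ∈ Icc 0 t, HasDerivAt x (x' s) s)
    (hw : ∀ s ∈ Icc 0 t, HasDerivAt w (w' s) s) (hx0 : x 0 = 0) (hw0 : w 0 = 0)
    (hx' : ∀ s ∈ Icc 0 t, ‖x' s‖ ≤ M * ‖w s‖)
    (hw' : ∀ s ∈ Icc 0 t, ‖w' s‖ ≤ L * (‖x s‖ + ‖w s‖ + b s))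
    (hb : IntegrableOn b (Icc 0 t)) (hb0 : ∀ s ∈ Icc 0 t, 0 ≤ b s) :
    ‖x t‖ ≤ (L + M) * exp ((L + M) * t) * ∫ s in 0..t, b s := by
  have hu : ContinuousOn (fun s => ‖x s‖ + ‖w s‖) (Icc 0 t) := fun s hs =>
    ((hx s hs).continuousAt.norm.add (hw s hs).continuousAt.norm).continuousWithinAt
  have hB : 0 ≤ ∫ s in 0..t, b s := intervalIntegral.integral_nonneg ht hb0
  have hu_le : ∀ s ∈ Icc 0 t, ‖x s‖ + ‖w s‖ ≤
      (L + M) * (∫ r in 0..s, ‖x r‖ + ‖w r‖) + L * ∫ r in 0..t, b r := by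
    intro s hs
    have hsub : Icc 0 s ⊆ Icc 0 t := Icc_subset_Icc_right hs.2
    grw [norm_add_norm_le_integral_of_hasDerivAt hM hs.1 (fun r hr => hx r (hsub hr))
      (fun r hr => hw r (hsub hr)) hx0 hw0 (fun r hr => hx' r (hsub hr))
      (fun r hr => hw' r (hsub hr))
      ((intervalIntegrable_iff_integrableOn_Icc_of_le hs.1).2 (hb.mono_set hsub))]
    gcongr
    exact intervalIntegral.integral_mono_interval le_rfl hs.1 hs.2
      ((ae_restrict_mem measurableSet_Ioc).mono fun r hr => hb0 r (Ioc_subset_Icc_self hr))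
      ((intervalIntegrable_iff_integrableOn_Icc_of_le ht).2 hb)
  calc ‖x t‖ ≤ ‖x t‖ + ‖w t‖ := le_add_of_nonneg_right (norm_nonneg _)
    _ ≤ L * (∫ s in 0..t, b s) * exp ((L + M) * (t - 0)) :=
        le_mul_exp_of_le_mul_integral_add (by positivity) ht hu hu_le
    _ ≤ (L + M) * exp ((L + M) * t) * ∫ s in 0..t, b s := by
        rw [sub_zero, mul_right_comm]
        gcongr
        linarith

theorem stmt0_general
    (vmax : ℝ) (hvmax : 0 < vmax) (N : NNReal) (T : ℝ)
    -- the acceleration functional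
    (a : Measure E2 → E2 → E2 → E2)
    (Lipa : ℝ) (hLipa : 0 < Lipa)
    -- Assumption 1: Lipschitz continuity
    (ha_lip : ∀ μ ν : Measure E2, IsFiniteMeasure μ → IsFiniteMeasure ν →
      μ Set.univ = (N : ENNReal) → ν Set.univ = (N : ENNReal) →
      ∀ x₁ x₂ w₁ w₂ : E2,
        ‖a ν x₂ w₂ - a μ x₁ w₁‖ ≤ Lipa * (‖x₂ - x₁‖ + ‖w₂ - w₁‖ + W1 μ ν))
    -- the two time-dependent families of measures of mass N
    (μ1 μ2 : ℝ → Measure E2)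
    (hμ1 : ∀ s ∈ Set.Icc (0 : ℝ) T, IsFiniteMeasure (μ1 s) ∧ μ1 s Set.univ = (N : ENNReal))
    (hμ2 : ∀ s ∈ Set.Icc (0 : ℝ) T, IsFiniteMeasure (μ2 s) ∧ μ2 s Set.univ = (N : ENNReal))
    -- integrability of the Wasserstein distance in time
    (hW : IntegrableOn (fun s => W1 (μ1 s) (μ2 s)) (Set.Icc (0 : ℝ) T))
    -- the associated trajectories
    (x₁ w₁ x₂ w₂ : ℝ → E2)
    (hx₁ : ∀ t ∈ Set.Icc (0 : ℝ) T, HasDerivAt x₁ (g (‖w₁ t‖ / vmax) • w₁ t) t)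
    (hw₁ : ∀ t ∈ Set.Icc (0 : ℝ) T, HasDerivAt w₁ (a (μ1 t) (x₁ t) (w₁ t)) t)
    (hx₂ : ∀ t ∈ Set.Icc (0 : ℝ) T, HasDerivAt x₂ (g (‖w₂ t‖ / vmax) • w₂ t) t)
    (hw₂ : ∀ t ∈ Set.Icc (0 : ℝ) T, HasDerivAt w₂ (a (μ2 t) (x₂ t) (w₂ t)) t)
    -- same initial data
    (h0x : x₁ 0 = x₂ 0) (h0w : w₁ 0 = w₂ 0) :
    ∃ C > (0 : ℝ), ∀ t ∈ Set.Icc (0 : ℝ) T,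
      ‖x₂ t - x₁ t‖ ≤ C * Real.exp (C * t) * ∫ s in (0 : ℝ)..t, W1 (μ1 s) (μ2 s) := by
  refine ⟨Lipa + 2, by positivity, fun t ht => ?_⟩
  have hsub : Icc 0 t ⊆ Icc 0 T := Icc_subset_Icc_right ht.2
  refine norm_le_mul_exp_mul_integral_of_hasDerivAt (x := fun s => x₂ s - x₁ s)
    (w := fun s => w₂ s - w₁ s) hLipa.le zero_le_two ht.1
    (fun s hs => (hx₂ s (hsub hs)).sub (hx₁ s (hsub hs)))
    (fun s hs => (hw₂ s (hsub hs)).sub (hw₁ s (hsub hs)))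
    (sub_eq_zero.2 h0x.symm) (sub_eq_zero.2 h0w.symm)
    (fun s _ => by simpa using (lipschitzWith_g_norm_div_smul hvmax).norm_sub_le (w₂ s) (w₁ s))
    (fun s hs => ?_) (hW.mono_set hsub) (fun s _ => W1_nonneg _ _)
  obtain ⟨hfin1, hmass1⟩ := hμ1 s (hsub hs)
  obtain ⟨hfin2, hmass2⟩ := hμ2 s (hsub hs)
  exact ha_lip _ _ hfin1 hfin2 hmass1 hmass2 _ _ _ _

theorem stmt0
    (vmax : ℝ) (hvmax : 0 < vmax) (N : NNReal) (T : ℝ) (hT : 0 ≤ T)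
    -- the acceleration functional
    (a : Measure E2 → E2 → E2 → E2)
    (amax Lipa : ℝ) (hamax : 0 < amax) (hLipa : 0 < Lipa)
    -- Assumption 1: boundedness
    (ha_bdd : ∀ μ : Measure E2, IsFiniteMeasure μ → μ Set.univ = (N : ENNReal) →
      ∀ x w : E2, ‖a μ x w‖ ≤ amax)
    -- Assumption 1: Lipschitz continuity
    (ha_lip : ∀ μ ν : Measure E2, IsFiniteMeasure μ → IsFiniteMeasure ν →
      μ Set.univ = (N : ENNReal) → ν Set.univ = (N : ENNReal) →
      ∀ x₁ x₂ w₁ w₂ : E2,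
        ‖a ν x₂ w₂ - a μ x₁ w₁‖ ≤ Lipa * (‖x₂ - x₁‖ + ‖w₂ - w₁‖ + W1 μ ν))
    -- the two time-dependent families of measures of mass N
    (μ1 μ2 : ℝ → Measure E2)
    (hμ1 : ∀ s ∈ Set.Icc (0 : ℝ) T, IsFiniteMeasure (μ1 s) ∧ μ1 s Set.univ = (N : ENNReal))
    (hμ2 : ∀ s ∈ Set.Icc (0 : ℝ) T, IsFiniteMeasure (μ2 s) ∧ μ2 s Set.univ = (N : ENNReal))
    -- integrability of the Wasserstein distance in time
    (hW : IntegrableOn (fun s => W1 (μ1 s) (μ2 s)) (Set.Icc (0 : ℝ) T))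
    -- the associated trajectories
    (x₁ w₁ x₂ w₂ : ℝ → E2)
    (hx₁ : ∀ t ∈ Set.Icc (0 : ℝ) T, HasDerivAt x₁ (g (‖w₁ t‖ / vmax) • w₁ t) t)
    (hw₁ : ∀ t ∈ Set.Icc (0 : ℝ) T, HasDerivAt w₁ (a (μ1 t) (x₁ t) (w₁ t)) t)
    (hx₂ : ∀ t ∈ Set.Icc (0 : ℝ) T, HasDerivAt x₂ (g (‖w₂ t‖ / vmax) • w₂ t) t)
    (hw₂ : ∀ t ∈ Set.Icc (0 : ℝ) T, HasDerivAt w₂ (a (μ2 t) (x₂ t) (w₂ t)) t)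
    -- same initial data
    (h0x : x₁ 0 = x₂ 0) (h0w : w₁ 0 = w₂ 0) :
    ∃ C > (0 : ℝ), ∀ t ∈ Set.Icc (0 : ℝ) T,
      ‖x₂ t - x₁ t‖ ≤ C * Real.exp (C * t) * ∫ s in (0 : ℝ)..t, W1 (μ1 s) (μ2 s) :=
  stmt0_general vmax hvmax N T a Lipa hLipa ha_lip μ1 μ2 hμ1 hμ2 hW x₁ w₁ x₂ w₂ hx₁ hw₁ hx₂ hw₂ h0x
    h0w
end
end

section
/- Let (μ¹_t)_{t∈[0,T]} and (μ²_t)_{t∈[0,T]} be two time-dependent families of finite positive Borel measures on ℝ² of total mass N such that s ↦ W₁(μ¹_s, μ²_s) is integrable on [0,T], and let (x₁, w₁) and (x₂, w₂) be trajectories associated with (μ¹_t) and (μ²_t) respectively, with the same initial data x₁(0) = x₂(0), w₁(0) = w₂(0). Then for all t ∈ [0, T], |w₂(t) − w₁(t)| ≤ Lip_a e^{Lip_a t} ∫₀ᵗ ( |x₂(s) − x₁(s)| + W₁(μ¹_s, μ²_s) ) ds, where Lip_a is the Lipschitz constant of the acceleration functional from Assumption 1. -/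
/-! Since `w₁ 0 = w₂ 0`, integrating the Lipschitz bound on the acceleration gives, for
`u = ‖w₂ - w₁‖` and `F = ‖x₂ - x₁‖ + W₁(μ¹, μ²) ≥ 0`, the estimate
`u r ≤ Lipa ∫₀ʳ (F + u) ≤ Lipa ∫₀ᵗ F + Lipa ∫₀ʳ u` for `r ≤ t`.
Grönwall's inequality in integral form then yields `u t ≤ Lipa e^{Lipa t} ∫₀ᵗ F`. -/

open MeasureTheory Real

noncomputable section

open Set

theorem norm_sub_le_integral_of_norm_deriv_le {E : Type*} [NormedAddCommGroup E]
    [NormedSpace ℝ E] [CompleteSpace E] {f f' : ℝ → E} {φ : ℝ → ℝ} {a b : ℝ} (hab : a ≤ b)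
    (hf : ∀ s ∈ Icc a b, HasDerivAt f (f' s) s) (hbound : ∀ s ∈ Icc a b, ‖f' s‖ ≤ φ s)
    (hφ : IntegrableOn φ (Icc a b)) :
    ‖f b - f a‖ ≤ ∫ s in a..b, φ s := by
  have hf'_eq : f' =ᵐ[volume.restrict (Icc a b)] deriv f :=
    (ae_restrict_iff' measurableSet_Icc).2 (ae_of_all _ fun s hs => (hf s hs).deriv.symm)
  have hf'_int : IntegrableOn f' (Icc a b) :=
    hφ.mono' ((stronglyMeasurable_deriv f).aestronglyMeasurable.congr hf'_eq.symm)
      ((ae_restrict_iff' measurableSet_Icc).2 (ae_of_all _ hbound))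
  rw [← intervalIntegral.integral_eq_sub_of_hasDerivAt
    (fun s hs => hf s (uIcc_of_le hab ▸ hs))
    ((intervalIntegrable_iff_integrableOn_Icc_of_le hab).2 hf'_int)]
  exact intervalIntegral.norm_integral_le_of_norm_le hab
    (ae_of_all _ fun s hs => hbound s (Ioc_subset_Icc_self hs))
    ((intervalIntegrable_iff_integrableOn_Icc_of_le hab).2 hφ)

theorem le_mul_exp_of_le_add_mul_integral {u : ℝ → ℝ} {c K t : ℝ} (hK : 0 ≤ K) (ht : 0 ≤ t)
    (hu : ContinuousOn u (Icc 0 t))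
    (hbound : ∀ r ∈ Icc 0 t, u r ≤ c + K * ∫ s in (0 : ℝ)..r, u s) :
    u t ≤ c * exp (K * t) := by
  -- extend `u` continuously to all of `ℝ`, so that its primitive is differentiable everywhere
  set v : ℝ → ℝ := fun s => u (projIcc 0 t ht s)
  have hv : Continuous v :=
    hu.comp_continuous continuous_projIcc.subtype_val fun s => (projIcc 0 t ht s).2
  have hvu : ∀ s ∈ Icc 0 t, v s = u s := fun s hs => by simp [v, projIcc_of_mem ht hs]
  have hint : ∀ r ∈ Icc 0 t, ∫ s in (0 : ℝ)..r, v s = ∫ s in (0 : ℝ)..r, u s := fun r hr =>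
    intervalIntegral.integral_congr fun s hs =>
      hvu s (Icc_subset_Icc_right hr.2 (uIcc_of_le hr.1 ▸ hs))
  set G : ℝ → ℝ := fun r => ∫ s in (0 : ℝ)..r, v s
  have hG : ∀ r, HasDerivAt G (v r) r := fun r => (hv.integral_hasStrictDerivAt 0 r).hasDerivAt
  have hGt : G t ≤ gronwallBound 0 K c t := by
    simpa using le_gronwallBound_of_liminf_deriv_right_le (f := G) (f' := v) (δ := 0)
      (fun r _ => (hG r).continuousAt.continuousWithinAt)
      (fun r _ _ hr => by simpa [slope_def_module] using
        (hG r).hasDerivWithinAt.liminf_right_slope_le hr)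
      (by simp [G])
      (fun r hr => by
        have hr' := Ico_subset_Icc_self hr
        simp only [G, hvu r hr', hint r hr']
        linarith [hbound r hr'])
      t ⟨ht, le_rfl⟩
  calc u t ≤ c + K * G t := by simpa only [G, hint t ⟨ht, le_rfl⟩] using hbound t ⟨ht, le_rfl⟩
    _ ≤ c + K * gronwallBound 0 K c t := by gcongr
    _ = c * exp (K * t) := by
      rcases hK.eq_or_lt with rfl | hK
      · simp [gronwallBound_K0]
      · rw [gronwallBound_of_K_ne_0 hK.ne']
        field_simp
        ring

theorem le_mul_exp_mul_integral_of_le_integral {u F : ℝ → ℝ} {K t : ℝ} (hK : 0 ≤ K)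
    (ht : 0 ≤ t) (hu : ContinuousOn u (Icc 0 t)) (hF : IntegrableOn F (Icc 0 t))
    (hF0 : ∀ s ∈ Icc 0 t, 0 ≤ F s)
    (hbound : ∀ r ∈ Icc 0 t, u r ≤ ∫ s in (0 : ℝ)..r, K * (F s + u s)) :
    u t ≤ K * exp (K * t) * ∫ s in (0 : ℝ)..t, F s := by
  rw [mul_right_comm]
  refine le_mul_exp_of_le_add_mul_integral hK ht hu fun r hr => ?_
  have hFr : IntervalIntegrable F volume 0 r :=
    (intervalIntegrable_iff_integrableOn_Icc_of_le hr.1).2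
      (hF.mono_set (Icc_subset_Icc_right hr.2))
  have hur : IntervalIntegrable u volume 0 r :=
    (hu.mono (Icc_subset_Icc_right hr.2)).intervalIntegrable_of_Icc hr.1
  calc u r ≤ ∫ s in (0 : ℝ)..r, K * (F s + u s) := hbound r hr
    _ = K * (∫ s in (0 : ℝ)..r, F s) + K * ∫ s in (0 : ℝ)..r, u s := by
      rw [intervalIntegral.integral_const_mul, intervalIntegral.integral_add hFr hur, mul_add]
    _ ≤ K * (∫ s in (0 : ℝ)..t, F s) + K * ∫ s in (0 : ℝ)..r, u s := by
      gcongr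
      exact intervalIntegral.integral_mono_interval le_rfl hr.1 hr.2
        ((ae_restrict_iff' measurableSet_Ioc).2
          (ae_of_all _ fun s hs => hF0 s (Ioc_subset_Icc_self hs)))
        ((intervalIntegrable_iff_integrableOn_Icc_of_le ht).2 hF)

theorem stmt1_general
    (vmax : ℝ) (N : NNReal) (T : ℝ)
    -- the acceleration functional
    (a : Measure E2 → E2 → E2 → E2)
    (Lipa : ℝ) (hLipa : 0 < Lipa)
    -- Assumption 1: Lipschitz continuity
    (ha_lip : ∀ μ ν : Measure E2, IsFiniteMeasure μ → IsFiniteMeasure ν →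
      μ Set.univ = (N : ENNReal) → ν Set.univ = (N : ENNReal) →
      ∀ x₁ x₂ w₁ w₂ : E2,
        ‖a ν x₂ w₂ - a μ x₁ w₁‖ ≤ Lipa * (‖x₂ - x₁‖ + ‖w₂ - w₁‖ + W1 μ ν))
    -- the two time-dependent families of measures of mass N
    (μ1 μ2 : ℝ → Measure E2)
    (hμ1 : ∀ s ∈ Set.Icc (0 : ℝ) T, IsFiniteMeasure (μ1 s) ∧ μ1 s Set.univ = (N : ENNReal))
    (hμ2 : ∀ s ∈ Set.Icc (0 : ℝ) T, IsFiniteMeasure (μ2 s) ∧ μ2 s Set.univ = (N : ENNReal))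
    -- integrability of the Wasserstein distance in time
    (hW : IntegrableOn (fun s => W1 (μ1 s) (μ2 s)) (Set.Icc (0 : ℝ) T))
    -- the associated trajectories
    (x₁ w₁ x₂ w₂ : ℝ → E2)
    (hx₁ : ∀ t ∈ Set.Icc (0 : ℝ) T, HasDerivAt x₁ (g (‖w₁ t‖ / vmax) • w₁ t) t)
    (hw₁ : ∀ t ∈ Set.Icc (0 : ℝ) T, HasDerivAt w₁ (a (μ1 t) (x₁ t) (w₁ t)) t)
    (hx₂ : ∀ t ∈ Set.Icc (0 : ℝ) T, HasDerivAt x₂ (g (‖w₂ t‖ / vmax) • w₂ t) t)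
    (hw₂ : ∀ t ∈ Set.Icc (0 : ℝ) T, HasDerivAt w₂ (a (μ2 t) (x₂ t) (w₂ t)) t)
    -- same initial data
    (h0w : w₁ 0 = w₂ 0) :
    ∀ t ∈ Set.Icc (0 : ℝ) T,
      ‖w₂ t - w₁ t‖ ≤ Lipa * Real.exp (Lipa * t) *
        ∫ s in (0 : ℝ)..t, (‖x₂ s - x₁ s‖ + W1 (μ1 s) (μ2 s)) := by
  intro t ht
  have hsub : Icc 0 t ⊆ Icc 0 T := Icc_subset_Icc_right ht.2
  have hx : ContinuousOn (fun s => x₂ s - x₁ s) (Icc 0 T) := fun s hs =>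
    ((hx₂ s hs).continuousAt.sub (hx₁ s hs).continuousAt).continuousWithinAt
  have hw : ContinuousOn (fun s => w₂ s - w₁ s) (Icc 0 T) := fun s hs =>
    ((hw₂ s hs).continuousAt.sub (hw₁ s hs).continuousAt).continuousWithinAt
  have hacc : ∀ s ∈ Icc 0 T, ‖a (μ2 s) (x₂ s) (w₂ s) - a (μ1 s) (x₁ s) (w₁ s)‖ ≤
      Lipa * ((‖x₂ s - x₁ s‖ + W1 (μ1 s) (μ2 s)) + ‖w₂ s - w₁ s‖) := fun s hs => by
    obtain ⟨hfin₁, hmass₁⟩ := hμ1 s hs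
    obtain ⟨hfin₂, hmass₂⟩ := hμ2 s hs
    linarith [ha_lip _ _ hfin₁ hfin₂ hmass₁ hmass₂ (x₁ s) (x₂ s) (w₁ s) (w₂ s)]
  have hF : IntegrableOn (fun s => ‖x₂ s - x₁ s‖ + W1 (μ1 s) (μ2 s)) (Icc 0 T) :=
    hx.norm.integrableOn_Icc.add hW
  have hmaj : IntegrableOn
      (fun s => Lipa * ((‖x₂ s - x₁ s‖ + W1 (μ1 s) (μ2 s)) + ‖w₂ s - w₁ s‖)) (Icc 0 T) :=
    (hF.add hw.norm.integrableOn_Icc).const_mul Lipa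
  refine le_mul_exp_mul_integral_of_le_integral hLipa.le ht.1 (hw.mono hsub).norm
    (hF.mono_set hsub) (fun s _ => add_nonneg (norm_nonneg _) (W1_nonneg _ _)) fun r hr => ?_
  have hsub_r : Icc 0 r ⊆ Icc 0 T := (Icc_subset_Icc_right hr.2).trans hsub
  simpa [h0w] using norm_sub_le_integral_of_norm_deriv_le hr.1
    (fun s hs => (hw₂ s (hsub_r hs)).sub (hw₁ s (hsub_r hs)))
    (fun s hs => hacc s (hsub_r hs)) (hmaj.mono_set hsub_r)

theorem stmt1
    (vmax : ℝ) (hvmax : 0 < vmax) (N : NNReal) (T : ℝ) (hT : 0 ≤ T)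
    -- the acceleration functional
    (a : Measure E2 → E2 → E2 → E2)
    (amax Lipa : ℝ) (hamax : 0 < amax) (hLipa : 0 < Lipa)
    -- Assumption 1: boundedness
    (ha_bdd : ∀ μ : Measure E2, IsFiniteMeasure μ → μ Set.univ = (N : ENNReal) →
      ∀ x w : E2, ‖a μ x w‖ ≤ amax)
    -- Assumption 1: Lipschitz continuity
    (ha_lip : ∀ μ ν : Measure E2, IsFiniteMeasure μ → IsFiniteMeasure ν →
      μ Set.univ = (N : ENNReal) → ν Set.univ = (N : ENNReal) →
      ∀ x₁ x₂ w₁ w₂ : E2,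
        ‖a ν x₂ w₂ - a μ x₁ w₁‖ ≤ Lipa * (‖x₂ - x₁‖ + ‖w₂ - w₁‖ + W1 μ ν))
    -- the two time-dependent families of measures of mass N
    (μ1 μ2 : ℝ → Measure E2)
    (hμ1 : ∀ s ∈ Set.Icc (0 : ℝ) T, IsFiniteMeasure (μ1 s) ∧ μ1 s Set.univ = (N : ENNReal))
    (hμ2 : ∀ s ∈ Set.Icc (0 : ℝ) T, IsFiniteMeasure (μ2 s) ∧ μ2 s Set.univ = (N : ENNReal))
    -- integrability of the Wasserstein distance in time
    (hW : IntegrableOn (fun s => W1 (μ1 s) (μ2 s)) (Set.Icc (0 : ℝ) T))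
    -- the associated trajectories
    (x₁ w₁ x₂ w₂ : ℝ → E2)
    (hx₁ : ∀ t ∈ Set.Icc (0 : ℝ) T, HasDerivAt x₁ (g (‖w₁ t‖ / vmax) • w₁ t) t)
    (hw₁ : ∀ t ∈ Set.Icc (0 : ℝ) T, HasDerivAt w₁ (a (μ1 t) (x₁ t) (w₁ t)) t)
    (hx₂ : ∀ t ∈ Set.Icc (0 : ℝ) T, HasDerivAt x₂ (g (‖w₂ t‖ / vmax) • w₂ t) t)
    (hw₂ : ∀ t ∈ Set.Icc (0 : ℝ) T, HasDerivAt w₂ (a (μ2 t) (x₂ t) (w₂ t)) t)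
    -- same initial data
    (h0x : x₁ 0 = x₂ 0) (h0w : w₁ 0 = w₂ 0) :
    ∀ t ∈ Set.Icc (0 : ℝ) T,
      ‖w₂ t - w₁ t‖ ≤ Lipa * Real.exp (Lipa * t) *
        ∫ s in (0 : ℝ)..t, (‖x₂ s - x₁ s‖ + W1 (μ1 s) (μ2 s)) :=
  stmt1_general vmax N T a Lipa hLipa ha_lip μ1 μ2 hμ1 hμ2 hW x₁ w₁ x₂ w₂ hx₁ hw₁ hx₂ hw₂ h0w
end
end
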